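/- arXiv:2603.04618 — 2 statements merged into one kernel-verified Lean document; each statement's English description precedes it below -/
import Mathlib

section
/- (Theorem 3, finite temperature.) Let Y be a d×d positive semidefinite matrix. Let σ_in be a pure density matrix (σ_in = φ φ† for some unit vector φ ∈ ℂ^d) with Re Tr[Y σ_in] ≤ 1, let ω be a density matrix with Re Tr[Y ω] ≤ 1 (the output of a free, resource-non-generating operation on σ_in), and let ρ_out be a density matrix with R := Re Tr[Y ρ_out] − 1 > 0 (the resourceful output state). Fix β > 0 and λ > 0 with λ·β·R > S(ρ_out), and set H = λ·Y. Then (F_H(ω) − F_H(σ_in)) · (λ·R − β⁻¹·S(ρ_out)) ≤ λ · (F_H(ρ_out) − F_H(σ_in)). (Equivalently, the relative work cost of producing the free output ω instead of the resourceful output ρ_out is at most 1/(R − λ⁻¹β⁻¹ S(ρ_out)).) -/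
open Matrix ComplexOrder

/-- A density matrix: positive semidefinite with unit trace. -/
def IsDensityMatrix {n : Type*} [Fintype n] (ρ : Matrix n n ℂ) : Prop :=
  ρ.PosSemidef ∧ ρ.trace = 1

/-- The von Neumann entropy `S(ρ) = -∑ᵢ λᵢ log λᵢ` of a Hermitian matrix,
computed from its eigenvalues (junk value `0` for non-Hermitian matrices). -/
noncomputable def vnEntropy {n : Type*} [Fintype n] [DecidableEq n]
    (ρ : Matrix n n ℂ) : ℝ :=
  if h : ρ.IsHermitian then ∑ i, -(h.eigenvalues i * Real.log (h.eigenvalues i)) else 0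

/-- The free energy `F_H(ρ) = Re Tr[Hρ] - β⁻¹ S(ρ)`. -/
noncomputable def freeEnergy {n : Type*} [Fintype n] [DecidableEq n]
    (β : ℝ) (H ρ : Matrix n n ℂ) : ℝ :=
  ((H * ρ).trace).re - β⁻¹ * vnEntropy ρ
section

variable {n : Type*} [Fintype n]

theorem IsDensityMatrix.vnEntropy_nonneg [DecidableEq n] {ρ : Matrix n n ℂ}
    (hρ : IsDensityMatrix ρ) : 0 ≤ vnEntropy ρ := by
  obtain ⟨hpsd, htr⟩ := hρ
  have hsum : ∑ i, hpsd.1.eigenvalues i = 1 := by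
    have h := hpsd.1.trace_eq_sum_eigenvalues
    rw [htr] at h
    simpa using congrArg Complex.re h.symm
  rw [vnEntropy, dif_pos hpsd.1]
  refine Finset.sum_nonneg fun i _ => ?_
  have hle : hpsd.1.eigenvalues i ≤ 1 :=
    hsum ▸ Finset.single_le_sum (fun j _ => hpsd.eigenvalues_nonneg j) (Finset.mem_univ i)
  exact neg_nonneg.mpr (Real.mul_log_nonpos (hpsd.eigenvalues_nonneg i) hle)

theorem vnEntropy_eq_zero_of_isIdempotentElem [DecidableEq n] {P : Matrix n n ℂ}
    (hP : P.IsHermitian) (hPP : IsIdempotentElem P) : vnEntropy P = 0 := by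
  rw [vnEntropy, dif_pos hP]
  refine Finset.sum_eq_zero fun i _ => ?_
  rcases hPP.spectrum_subset ℝ (hP.eigenvalues_mem_spectrum_real i) with h | h <;>
    simp [Set.mem_singleton_iff.mp h]

theorem star_dotProduct_self_eq_sum_norm_sq (φ : n → ℂ) :
    star φ ⬝ᵥ φ = ((∑ j, ‖φ j‖ ^ 2 : ℝ) : ℂ) := by
  simp [dotProduct, Complex.conj_mul']

theorem isIdempotentElem_vecMulVec_star {φ : n → ℂ} (hφ : star φ ⬝ᵥ φ = 1) :
    IsIdempotentElem (vecMulVec φ (star φ)) := by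
  rw [IsIdempotentElem, vecMulVec_mul_vecMulVec, hφ, one_smul]

theorem vnEntropy_vecMulVec_star [DecidableEq n] {φ : n → ℂ} (hφ : ∑ j, ‖φ j‖ ^ 2 = 1) :
    vnEntropy (vecMulVec φ (star φ)) = 0 :=
  vnEntropy_eq_zero_of_isIdempotentElem (posSemidef_vecMulVec_self_star φ).1
    (isIdempotentElem_vecMulVec_star (by rw [star_dotProduct_self_eq_sum_norm_sq, hφ]; simp))

theorem Matrix.PosSemidef.re_trace_mul_vecMulVec_star_nonneg {Y : Matrix n n ℂ}
    (hY : Y.PosSemidef) (φ : n → ℂ) : 0 ≤ ((Y * vecMulVec φ (star φ)).trace).re := by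
  rw [mul_vecMulVec, trace_vecMulVec, dotProduct_comm]
  exact (Complex.le_def.mp (hY.dotProduct_mulVec_nonneg φ)).1

theorem freeEnergy_ofReal_smul [DecidableEq n] (β lam : ℝ) (Y ρ : Matrix n n ℂ) :
    freeEnergy β ((lam : ℂ) • Y) ρ = lam * ((Y * ρ).trace).re - β⁻¹ * vnEntropy ρ := by
  rw [freeEnergy, smul_mul_assoc, trace_smul, smul_eq_mul, Complex.re_ofReal_mul]

end

theorem cost_of_resource_generation_finite_temperature_general {d : ℕ}
    (Y : Matrix (Fin d) (Fin d) ℂ) (hY : Y.PosSemidef)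
    (φ : Fin d → ℂ) (hφ : ∑ j, ‖φ j‖ ^ 2 = 1)
    (hσin : ((Y * vecMulVec φ (star φ)).trace).re ≤ 1)
    (ω : Matrix (Fin d) (Fin d) ℂ) (hω : IsDensityMatrix ω)
    (hωY : ((Y * ω).trace).re ≤ 1)
    (ρout : Matrix (Fin d) (Fin d) ℂ)
    (β lam : ℝ) (hβ : 0 < β) (hlam : 0 < lam)
    (hcond : vnEntropy ρout < lam * β * (((Y * ρout).trace).re - 1)) :
    (freeEnergy β ((lam : ℂ) • Y) ω - freeEnergy β ((lam : ℂ) • Y) (vecMulVec φ (star φ))) *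
        (lam * (((Y * ρout).trace).re - 1) - β⁻¹ * vnEntropy ρout) ≤
      lam * (freeEnergy β ((lam : ℂ) • Y) ρout -
        freeEnergy β ((lam : ℂ) • Y) (vecMulVec φ (star φ))) := by
  have hin := hY.re_trace_mul_vecMulVec_star_nonneg φ
  have hSω := mul_nonneg (inv_nonneg.mpr hβ.le) hω.vnEntropy_nonneg
  have hgap : 0 < lam * (((Y * ρout).trace).re - 1) - β⁻¹ * vnEntropy ρout := by
    rw [sub_pos, inv_mul_lt_iff₀ hβ, ← mul_assoc, mul_comm β]
    exact hcond
  have hωle : lam * ((Y * ω).trace).re - β⁻¹ * vnEntropy ω ≤ lam := by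
    linarith [mul_le_mul_of_nonneg_left hωY hlam.le]
  simp only [freeEnergy_ofReal_smul, vnEntropy_vecMulVec_star hφ, mul_zero, sub_zero]
  -- With `t = Re Tr[Yσ_in] ∈ [0, 1]` and `a > 0` the second factor, `F(σ_in) = λt`, so
  -- `(F(ω) - F(σ_in)) a ≤ λ(1 - t) a ≤ λ a ≤ λ (a + λ(1 - t)) = λ (F(ρ_out) - F(σ_in))`.
  linarith [mul_le_mul_of_nonneg_right hωle hgap.le, mul_nonneg (mul_nonneg hlam.le hin) hgap.le,
    mul_nonneg hlam.le (mul_nonneg hlam.le (sub_nonneg.mpr hσin))]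

/-- Theorem 3, finite temperature: for a pure free input `σ_in = φφ†`, a free
output `ω`, and a resourceful output `ρ_out` with witness value `R > 0`, the
work cost (with Hamiltonian `H = λY`) of producing the free output is at most
`1/(R − λ⁻¹β⁻¹S(ρ_out))` times that of producing the resourceful output,
stated in a cross-multiplied form. -/
theorem cost_of_resource_generation_finite_temperature {d : ℕ}
    (Y : Matrix (Fin d) (Fin d) ℂ) (hY : Y.PosSemidef)
    (φ : Fin d → ℂ) (hφ : ∑ j, ‖φ j‖ ^ 2 = 1)
    (hσin : ((Y * vecMulVec φ (star φ)).trace).re ≤ 1)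
    (ω : Matrix (Fin d) (Fin d) ℂ) (hω : IsDensityMatrix ω)
    (hωY : ((Y * ω).trace).re ≤ 1)
    (ρout : Matrix (Fin d) (Fin d) ℂ) (hρout : IsDensityMatrix ρout)
    (hR : 0 < ((Y * ρout).trace).re - 1)
    (β lam : ℝ) (hβ : 0 < β) (hlam : 0 < lam)
    (hcond : vnEntropy ρout < lam * β * (((Y * ρout).trace).re - 1)) :
    (freeEnergy β ((lam : ℂ) • Y) ω - freeEnergy β ((lam : ℂ) • Y) (vecMulVec φ (star φ))) *
        (lam * (((Y * ρout).trace).re - 1) - β⁻¹ * vnEntropy ρout) ≤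
      lam * (freeEnergy β ((lam : ℂ) • Y) ρout -
        freeEnergy β ((lam : ℂ) • Y) (vecMulVec φ (star φ))) :=
  cost_of_resource_generation_finite_temperature_general Y hY φ hφ hσin ω hω hωY ρout β lam hβ hlam
    hcond
end

section
/- (Robustness of coherence of N copies of the T state.) Let N ≥ 1 and let |T⟩ = (|0⟩ + e^{iπ/4}|1⟩)/√2 ∈ ℂ². Consider the N-fold tensor product state |T⟩^{⊗N} ∈ ℂ^{2^N} and let L_incoh be the set of all diagonal density matrices on ℂ^{2^N} (the incoherent states in the computational basis). Then the generalized robustness of coherence satisfies R_{L_incoh}((|T⟩⟨T|)^{⊗N}) = 2^N − 1. -/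
/-! Write `d = 2^N` and `ψ = |T⟩^{⊗N}`, so that `(|T⟩⟨T|)^{⊗N} = |ψ⟩⟨ψ|` and every amplitude of
`ψ` has `|ψ_f|² = 1/d`. For a diagonal state `σ` this flatness gives `⟨ψ|σ|ψ⟩ = tr σ / d = 1/d`,
whereas `⟨ψ|ρ + sγ|ψ⟩ ≥ ⟨ψ|ρ|ψ⟩ = 1`; so `(ρ + sγ)/(1+s)` can only be diagonal when `1 + s ≥ d`.
Conversely, `γ = (1 - ρ)/(d - 1)` is a state (as `1 - ρ` is a projection) with `ρ + (d-1)γ = 1`,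
which reaches the maximally mixed state (when `d = 1`, `ρ` is itself incoherent). -/

open Matrix ComplexOrder

/-- The generalized robustness of `ρ` with respect to the free set `L`. -/
noncomputable def robustness {n : Type*} [Fintype n]
    (L : Set (Matrix n n ℂ)) (ρ : Matrix n n ℂ) : ℝ :=
  sInf { s : ℝ | 0 ≤ s ∧ ∃ γ : Matrix n n ℂ, IsDensityMatrix γ ∧
    (1 + s)⁻¹ • (ρ + s • γ) ∈ L }

/-- The single-qubit `T` state `|T⟩ = (|0⟩ + e^{iπ/4}|1⟩)/√2`. -/
noncomputable def Tket : Fin 2 → ℂ :=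
  ![1 / (Real.sqrt 2 : ℂ), Complex.exp (Complex.I * (Real.pi / 4 : ℂ)) / (Real.sqrt 2 : ℂ)]

/-- The `N`-fold tensor power `(|T⟩⟨T|)^{⊗N}`, realized as a matrix indexed by
`Fin N → Fin 2` (the computational basis of `(ℂ²)^{⊗N} ≅ ℂ^{2^N}`), with entries
given by products of the entries of `|T⟩⟨T|`. -/
noncomputable def TstatePow (N : ℕ) : Matrix (Fin N → Fin 2) (Fin N → Fin 2) ℂ :=
  Matrix.of fun f g => ∏ k : Fin N, (vecMulVec Tket (star Tket)) (f k) (g k)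

section PureStates

variable {n : Type*} [Fintype n]

def admissibleWeights (L : Set (Matrix n n ℂ)) (ρ : Matrix n n ℂ) : Set ℝ :=
  { s : ℝ | 0 ≤ s ∧ ∃ γ : Matrix n n ℂ, IsDensityMatrix γ ∧ (1 + s)⁻¹ • (ρ + s • γ) ∈ L }

theorem robustness_eq_of_isLeast {L : Set (Matrix n n ℂ)} {ρ : Matrix n n ℂ} {r : ℝ}
    (h : IsLeast (admissibleWeights L ρ) r) : robustness L ρ = r :=
  h.csInf_eq

variable (n) in
def incoherentStates : Set (Matrix n n ℂ) :=
  { σ | IsDensityMatrix σ ∧ σ.IsDiag }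

theorem isDensityMatrix_vecMulVec_self_star {ψ : n → ℂ} (hψ : star ψ ⬝ᵥ ψ = 1) :
    IsDensityMatrix (vecMulVec ψ (star ψ)) :=
  ⟨posSemidef_vecMulVec_self_star ψ, by rw [trace_vecMulVec, dotProduct_comm, hψ]⟩

theorem isDensityMatrix_card_inv_smul_one [Nonempty n] [DecidableEq n] :
    IsDensityMatrix ((Fintype.card n : ℝ)⁻¹ • (1 : Matrix n n ℂ)) := by
  refine ⟨PosSemidef.one.smul (by positivity), ?_⟩
  rw [trace_smul, trace_one, Complex.real_smul]
  push_cast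
  exact inv_mul_cancel₀ (by simp)

theorem dotProduct_vecMulVec_self_star_mulVec {ψ : n → ℂ} (hψ : star ψ ⬝ᵥ ψ = 1) :
    star ψ ⬝ᵥ vecMulVec ψ (star ψ) *ᵥ ψ = 1 := by
  rw [vecMulVec_mulVec, hψ, MulOpposite.op_one, one_smul, hψ]

theorem posSemidef_one_sub_vecMulVec_self_star [DecidableEq n] {ψ : n → ℂ}
    (hψ : star ψ ⬝ᵥ ψ = 1) : (1 - vecMulVec ψ (star ψ)).PosSemidef := by
  set P := 1 - vecMulVec ψ (star ψ)
  have hP : Pᴴ * P = P := by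
    rw [conjTranspose_sub, conjTranspose_one, conjTranspose_vecMulVec, star_star, sub_mul,
      one_mul, mul_sub, mul_one, vecMulVec_mul_vecMulVec, hψ, one_smul]
    abel
  exact hP ▸ posSemidef_conjTranspose_mul_self P

variable {ψ : n → ℂ}

theorem dotProduct_star_self_of_flat [Nonempty n]
    (hψ : ∀ i, star (ψ i) * ψ i = (Fintype.card n : ℂ)⁻¹) : star ψ ⬝ᵥ ψ = 1 := by
  simp only [dotProduct, Pi.star_apply, hψ, Finset.sum_const, Finset.card_univ, nsmul_eq_mul]
  exact mul_inv_cancel₀ (by simp)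

theorem Matrix.IsDiag.dotProduct_mulVec_of_flat {σ : Matrix n n ℂ} (hσ : σ.IsDiag)
    (hψ : ∀ i, star (ψ i) * ψ i = (Fintype.card n : ℂ)⁻¹) :
    star ψ ⬝ᵥ σ *ᵥ ψ = σ.trace * (Fintype.card n : ℂ)⁻¹ := by
  classical
  rw [← hσ.diagonal_diag, trace_diagonal, Finset.sum_mul]
  simp only [dotProduct, mulVec_diagonal, Pi.star_apply]
  exact Finset.sum_congr rfl fun i _ => by rw [← hψ i]; ring

theorem card_sub_one_le_of_mem_admissibleWeights [Nonempty n]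
    (hψ : ∀ i, star (ψ i) * ψ i = (Fintype.card n : ℂ)⁻¹) {s : ℝ}
    (hs : s ∈ admissibleWeights (incoherentStates n) (vecMulVec ψ (star ψ))) :
    (Fintype.card n : ℝ) - 1 ≤ s := by
  obtain ⟨hs₀, γ, ⟨hγ, -⟩, ⟨-, hσ_trace⟩, hσ_diag⟩ := hs
  have hq : 0 ≤ star ψ ⬝ᵥ γ *ᵥ ψ := hγ.dotProduct_mulVec_nonneg ψ
  have key : (1 + s : ℂ)⁻¹ * (1 + s * (star ψ ⬝ᵥ γ *ᵥ ψ)) = (Fintype.card n : ℂ)⁻¹ := by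
    have h := hσ_diag.dotProduct_mulVec_of_flat hψ
    rwa [hσ_trace, one_mul, smul_mulVec, add_mulVec, smul_mulVec, dotProduct_smul,
      dotProduct_add, dotProduct_smul,
      dotProduct_vecMulVec_self_star_mulVec (dotProduct_star_self_of_flat hψ),
      Complex.real_smul, Complex.real_smul, Complex.ofReal_inv, Complex.ofReal_add,
      Complex.ofReal_one] at h
  have hcard : (0 : ℝ) < Fintype.card n := by simp [Fintype.card_pos]
  have hone : (1 : ℂ) ≤ ((1 + s) / Fintype.card n : ℝ) := by
    have h1s : (1 + s : ℂ) ≠ 0 := by exact_mod_cast (by positivity : (1 + s : ℝ) ≠ 0)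
    push_cast
    rw [div_eq_mul_inv, ← key, mul_inv_cancel_left₀ h1s]
    exact le_add_of_nonneg_right (mul_nonneg (by exact_mod_cast hs₀) hq)
  rw [← Complex.ofReal_one, Complex.real_le_real, one_le_div hcard] at hone
  linarith

theorem card_sub_one_mem_admissibleWeights [Nonempty n]
    (hψ : ∀ i, star (ψ i) * ψ i = (Fintype.card n : ℂ)⁻¹) :
    (Fintype.card n : ℝ) - 1 ∈ admissibleWeights (incoherentStates n) (vecMulVec ψ (star ψ)) := by
  classical
  have hunit := dotProduct_star_self_of_flat hψ
  rcases (Nat.one_le_iff_ne_zero.mpr Fintype.card_ne_zero : 1 ≤ Fintype.card n).eq_or_lt with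
    hcard | hcard
  · have : Subsingleton n := Fintype.card_le_one_iff_subsingleton.mp hcard.ge
    refine ⟨by simp [← hcard], vecMulVec ψ (star ψ), isDensityMatrix_vecMulVec_self_star hunit, ?_⟩
    simp only [← hcard, Nat.cast_one, sub_self, add_zero, inv_one, zero_smul, one_smul]
    exact ⟨isDensityMatrix_vecMulVec_self_star hunit,
      fun i j hij => (hij (Subsingleton.elim i j)).elim⟩
  · have hd : (0 : ℝ) < Fintype.card n - 1 := by
      rw [sub_pos]; exact_mod_cast hcard
    refine ⟨hd.le, (Fintype.card n - 1 : ℝ)⁻¹ • (1 - vecMulVec ψ (star ψ)),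
      ⟨(posSemidef_one_sub_vecMulVec_self_star hunit).smul (inv_nonneg.mpr hd.le), ?_⟩, ?_⟩
    · rw [trace_smul, trace_sub, trace_one, trace_vecMulVec, dotProduct_comm, hunit,
        Complex.real_smul]
      push_cast
      exact inv_mul_cancel₀ (by exact_mod_cast hd.ne')
    · rw [smul_smul, mul_inv_cancel₀ hd.ne', one_smul, add_sub_cancel, add_sub_cancel]
      exact ⟨isDensityMatrix_card_inv_smul_one, isDiag_one.smul _⟩

theorem robustness_incoherentStates_vecMulVec_of_flat [Nonempty n]
    (hψ : ∀ i, star (ψ i) * ψ i = (Fintype.card n : ℂ)⁻¹) :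
    robustness (incoherentStates n) (vecMulVec ψ (star ψ)) = Fintype.card n - 1 :=
  robustness_eq_of_isLeast ⟨card_sub_one_mem_admissibleWeights hψ,
    fun _ hs => card_sub_one_le_of_mem_admissibleWeights hψ hs⟩

end PureStates

theorem star_Tket_mul_Tket (i : Fin 2) : star (Tket i) * Tket i = 2⁻¹ := by
  rw [Complex.star_def, Complex.conj_mul']
  fin_cases i <;> simp [Tket, Complex.norm_exp, ← Complex.ofReal_pow]

noncomputable def TketPow (N : ℕ) (f : Fin N → Fin 2) : ℂ :=
  ∏ k, Tket (f k)

theorem TstatePow_eq_vecMulVec (N : ℕ) :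
    TstatePow N = vecMulVec (TketPow N) (star (TketPow N)) := by
  ext f g
  simp [TstatePow, TketPow, vecMulVec_apply, Finset.prod_mul_distrib, star_prod]

theorem star_TketPow_mul_TketPow (N : ℕ) (f : Fin N → Fin 2) :
    star (TketPow N f) * TketPow N f = (Fintype.card (Fin N → Fin 2) : ℂ)⁻¹ := by
  simp only [TketPow, star_prod, ← Finset.prod_mul_distrib, star_Tket_mul_Tket]
  simp

theorem robustness_of_coherence_T_states_general (N : ℕ) :
    robustness
        { σ : Matrix (Fin N → Fin 2) (Fin N → Fin 2) ℂ |
          IsDensityMatrix σ ∧ ∀ f g, f ≠ g → σ f g = 0 }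
        (TstatePow N) =
      2 ^ N - 1 := by
  have hcard : (Fintype.card (Fin N → Fin 2) : ℝ) = 2 ^ N := by simp
  rw [← hcard, TstatePow_eq_vecMulVec]
  exact robustness_incoherentStates_vecMulVec_of_flat (star_TketPow_mul_TketPow N)

/-- The robustness of coherence (relative to diagonal density matrices in the
computational basis) of `N` copies of the `T` state is `2^N − 1`. -/
theorem robustness_of_coherence_T_states (N : ℕ) (hN : 1 ≤ N) :
    robustness
        { σ : Matrix (Fin N → Fin 2) (Fin N → Fin 2) ℂ |
          IsDensityMatrix σ ∧ ∀ f g, f ≠ g → σ f g = 0 }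
        (TstatePow N) =
      2 ^ N - 1 :=
  robustness_of_coherence_T_states_general N
end
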